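/- The Casimir element of the Λ-deformed inner product on Hermitian matrices is given by Σ_{i,j} (2/(Λ_i+Λ_j)) E_{ij} ⊗ E_{ji}: that is, the coevaluation coev(1) ∈ H_N ⊗ H_N determined by the inner product ⟨X,Y⟩_Λ = ½(tr(XΛY)+tr(YΛX)) with Λ = diag(Λ_1,…,Λ_N) equals Σ_{i,j} (2/(Λ_i+Λ_j)) E_{ij} ⊗ E_{ji}. -/

import Mathlib

open TensorProduct Matrix

/-- the Casimir element of the Λ-deformed inner product
`⟨X,Y⟩_Λ = ½(tr(XΛY)+tr(YΛX))`, `Λ = diag(Λ₁,…,Λ_N)`, viewed in the complexification,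
is `∑_{i,j} (2/(Λ_i+Λ_j)) E_{ij} ⊗ E_{ji}`. -/
theorem casimir_lambda_inner_product
    (N : ℕ) (Λ : Fin N → ℝ) (hΛ : ∀ i, 0 < Λ i)
    (D : Matrix (Fin N) (Fin N) ℂ)
    (hD : D = Matrix.diagonal fun i => (Λ i : ℂ))
    (B : LinearMap.BilinForm ℂ (Matrix (Fin N) (Fin N) ℂ))
    (hB : ∀ X Y, B X Y =
      (1 / 2 : ℂ) * (Matrix.trace (X * D * Y) + Matrix.trace (Y * D * X)))
    {ι : Type*} [Fintype ι] [DecidableEq ι]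
    (e : Module.Basis ι ℂ (Matrix (Fin N) (Fin N) ℂ))
    (f : ι → Matrix (Fin N) (Fin N) ℂ)
    (hf : ∀ a b, B (e a) (f b) = if a = b then (1 : ℂ) else 0) :
    ∑ a, e a ⊗ₜ[ℂ] f a =
      ∑ i : Fin N, ∑ j : Fin N,
        (2 / ((Λ i : ℂ) + (Λ j : ℂ))) •
          (Matrix.single i j (1 : ℂ) ⊗ₜ[ℂ] Matrix.single j i (1 : ℂ)) := by
  have hne : ∀ i j : Fin N, ((Λ i : ℂ) + (Λ j : ℂ)) ≠ 0 := by
    intro i j h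
    have : ((Λ i + Λ j : ℝ) : ℂ) = 0 := by push_cast; exact h
    have := Complex.ofReal_eq_zero.mp this
    nlinarith [hΛ i, hΛ j]
  have key : ∀ (i j : Fin N) (X : Matrix (Fin N) (Fin N) ℂ),
      B (Matrix.single j i 1) X = (((Λ i : ℂ) + Λ j)/2) * X i j := by
    intro i j X
    rw [hB, hD]
    simp [Matrix.trace, Matrix.mul_apply, Matrix.single, Matrix.diagonal,
      Finset.mul_sum, ite_and, Finset.sum_ite_eq, Finset.sum_ite_eq']
    ring
  have hsymm : ∀ X Y : Matrix (Fin N) (Fin N) ℂ, B X Y = B Y X := by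
    intro X Y; rw [hB, hB]; ring
  let φ : Matrix (Fin N) (Fin N) ℂ →ₗ[ℂ] Matrix (Fin N) (Fin N) ℂ →ₗ[ℂ]
      (Matrix (Fin N) (Fin N) ℂ →ₗ[ℂ] Matrix (Fin N) (Fin N) ℂ) :=
    LinearMap.mk₂ ℂ (fun x y => (B y).smulRight x)
      (fun x x' y => by ext m; simp [mul_add])
      (fun c x y => by ext m; simp; ring)
      (fun x y y' => by ext m; simp [add_mul])
      (fun c x y => by ext m; simp; ring)
  let Φ := TensorProduct.lift φ
  have hΦtmul : ∀ (x y m : Matrix (Fin N) (Fin N) ℂ),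
      Φ (x ⊗ₜ[ℂ] y) m = B y m • x := fun x y m => rfl
  have hBinj : Function.Injective
      (B : Matrix (Fin N) (Fin N) ℂ →ₗ[ℂ] Module.Dual ℂ (Matrix (Fin N) (Fin N) ℂ)) := by
    rw [injective_iff_map_eq_zero]
    intro X hX
    ext i j
    have h2 : B X (Matrix.single j i 1) = 0 := by rw [hX]; rfl
    rw [← hsymm, key] at h2
    have := (mul_eq_zero.mp h2).resolve_left (by
      intro h
      apply hne i j
      have : ((Λ i : ℂ) + Λ j) = 2 * (((Λ i : ℂ) + Λ j)/2) := by ring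
      rw [this, h, mul_zero])
    simpa using this
  have hΦeq : Φ = (dualTensorHom ℂ (Matrix (Fin N) (Fin N) ℂ) (Matrix (Fin N) (Fin N) ℂ)) ∘ₗ
      (LinearMap.rTensor (Matrix (Fin N) (Fin N) ℂ)
        (B : Matrix (Fin N) (Fin N) ℂ →ₗ[ℂ] Module.Dual ℂ (Matrix (Fin N) (Fin N) ℂ))) ∘ₗ
      (TensorProduct.comm ℂ _ _).toLinearMap := by
    apply TensorProduct.ext'
    intro x y
    apply LinearMap.ext
    intro m
    simp [Φ, φ, dualTensorHom_apply]
  have hΦinj : Function.Injective Φ := by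
    rw [hΦeq]
    simp only [LinearMap.coe_comp, LinearEquiv.coe_coe]
    refine Function.Injective.comp ?_ (Function.Injective.comp ?_ ?_)
    · have : ⇑(dualTensorHom ℂ (Matrix (Fin N) (Fin N) ℂ) (Matrix (Fin N) (Fin N) ℂ)) =
          ⇑(dualTensorHomEquiv ℂ (Matrix (Fin N) (Fin N) ℂ) (Matrix (Fin N) (Fin N) ℂ)) := rfl
      rw [this]
      exact (dualTensorHomEquiv ℂ _ _).injective
    · exact Module.Flat.rTensor_preserves_injective_linearMap _ hBinj
    · exact (TensorProduct.comm ℂ _ _).injective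
  apply hΦinj
  have hL : Φ (∑ a, e a ⊗ₜ[ℂ] f a) = LinearMap.id := by
    refine LinearMap.ext fun m => ?_
    simp only [map_sum, LinearMap.coe_sum, Finset.sum_apply, LinearMap.id_coe, id_eq]
    have h1 : ∀ a, Φ (e a ⊗ₜ[ℂ] f a) m = (e.repr m a) • e a := by
      intro a
      rw [hΦtmul]
      congr 1
      rw [← hsymm]
      conv_lhs => rw [← e.sum_repr m]
      simp only [map_sum, LinearMap.sum_apply, LinearMapClass.map_smul, smul_eq_mul]
      simp [hf, mul_ite]
    rw [Finset.sum_congr rfl fun a _ => h1 a]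
    exact e.sum_repr m
  have hR : Φ (∑ i : Fin N, ∑ j : Fin N,
      (2 / ((Λ i : ℂ) + (Λ j : ℂ))) •
        (Matrix.single i j (1 : ℂ) ⊗ₜ[ℂ] Matrix.single j i (1 : ℂ))) =
      LinearMap.id := by
    refine LinearMap.ext fun m => ?_
    simp only [map_sum, _root_.map_smul, LinearMap.coe_sum, Finset.sum_apply,
      LinearMap.id_coe, id_eq, LinearMap.smul_apply]
    have h2 : ∀ i j : Fin N, (2 / ((Λ i : ℂ) + (Λ j : ℂ))) •
        Φ (Matrix.single i j (1 : ℂ) ⊗ₜ[ℂ] Matrix.single j i (1 : ℂ)) m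
        = m i j • Matrix.single i j (1 : ℂ) := by
      intro i j
      rw [hΦtmul, key, smul_smul]
      congr 1
      have coef : ∀ (a c : ℂ), a ≠ 0 → 2 / a * (a / 2 * c) = c := by
        intro a c ha; field_simp
      exact coef _ _ (hne i j)
    rw [Finset.sum_congr rfl fun i _ => Finset.sum_congr rfl fun j _ => h2 i j]
    have h3 : ∀ i j : Fin N, m i j • Matrix.single i j (1:ℂ)
        = Matrix.single i j (m i j) := by
      intro i j; rw [Matrix.smul_single, smul_eq_mul, mul_one]
    rw [Finset.sum_congr rfl fun i _ => Finset.sum_congr rfl fun j _ => h3 i j]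
    exact (Matrix.matrix_eq_sum_single m).symm
  rw [hL, hR]
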